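/- The space c₀ of real sequences converging to 0 is not complemented in ℓ∞: there is no bounded linear projection from ℓ∞ onto c₀ (Phillips–Sobczyk theorem). -/
import Mathlib

open scoped ENNReal
set_option synthInstance.maxHeartbeats 1000000
set_option maxHeartbeats 1000000

noncomputable section

/-- The Banach space `ℓ∞` of bounded real sequences with the supremum norm. -/
abbrev LInf : Type := lp (fun _ : ℕ => ℝ) ∞

/-- `c₀`: the subspace of `ℓ∞` of sequences tending to `0`. -/
def c0Sub : Submodule ℝ LInf where
  carrier := {x : LInf | Filter.Tendsto (fun n => x n) Filter.atTop (nhds 0)}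
  zero_mem' := by
    simp only [Set.mem_setOf_eq, lp.coeFn_zero, Pi.zero_apply]
    exact tendsto_const_nhds
  add_mem' := by
    intro x y hx hy
    have h := hx.add hy
    rw [add_zero] at h
    simpa only [Set.mem_setOf_eq, lp.coeFn_add, Pi.add_apply] using h
  smul_mem' := by
    intro c x hx
    have h := hx.const_mul c
    rw [mul_zero] at h
    simpa only [Set.mem_setOf_eq, lp.coeFn_smul, Pi.smul_apply, smul_eq_mul] using h

namespace PhillipsAux

/-! ### An almost disjoint family of infinite subsets of `ℕ`, indexed by `ℕ → Bool`. -/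

/-- Code of the length-`n` prefix of the branch `x`. -/
def pre (x : ℕ → Bool) (n : ℕ) : ℕ := Encodable.encode (List.ofFn fun i : Fin n => x i)

lemma pre_eq {x y : ℕ → Bool} {n m : ℕ} (h : pre x n = pre y m) :
    n = m ∧ ∀ i < n, x i = y i := by
  have hl : (List.ofFn fun i : Fin n => x i) = List.ofFn fun i : Fin m => y i :=
    Encodable.encode_injective h
  have hn : n = m := by
    have := congrArg List.length hl
    simpa using this
  subst hn
  refine ⟨rfl, fun i hi => ?_⟩
  have := List.ofFn_inj.mp hl
  exact congrFun this ⟨i, hi⟩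

lemma pre_injective (x : ℕ → Bool) : Function.Injective (pre x) :=
  fun n m h => (pre_eq h).1

/-- The set of codes of prefixes of `x`. -/
def A (x : ℕ → Bool) : Set ℕ := Set.range (pre x)

lemma A_infinite (x : ℕ → Bool) : (A x).Infinite :=
  Set.infinite_range_of_injective (pre_injective x)

lemma A_almost_disjoint {x y : ℕ → Bool} (hxy : x ≠ y) : (A x ∩ A y).Finite := by
  obtain ⟨k, hk⟩ : ∃ k, x k ≠ y k := by
    by_contra h
    push_neg at h
    exact hxy (funext h)
  have hsub : A x ∩ A y ⊆ pre x '' Set.Iic k := by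
    rintro m ⟨⟨n, rfl⟩, ⟨n', hn'⟩⟩
    obtain ⟨hnn, hpref⟩ := pre_eq hn'.symm
    refine ⟨n, ?_, rfl⟩
    by_contra hnk
    rw [Set.mem_Iic] at hnk
    push_neg at hnk
    exact hk (hpref k hnk)
  exact ((Set.finite_Iic k).image _).subset hsub

/-! ### Indicator elements of `ℓ∞` -/

/-- Constructor for elements of `ℓ∞`. -/
def mk (f : ℕ → ℝ) (h : Memℓp f ∞) : LInf := ⟨f, h⟩

@[simp] lemma mk_apply (f : ℕ → ℝ) (h : Memℓp f ∞) (m : ℕ) : mk f h m = f m := rfl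

open Classical in
lemma memℓp_indicator (s : Set ℕ) : Memℓp (s.indicator (1 : ℕ → ℝ)) ∞ := by
  apply memℓp_infty
  refine ⟨1, ?_⟩
  rintro r ⟨m, rfl⟩
  by_cases hm : m ∈ s <;> simp [Set.indicator_apply, hm]

/-- The indicator of a set of naturals, as an element of `ℓ∞`. -/
def ind (s : Set ℕ) : LInf := mk (s.indicator 1) (memℓp_indicator s)

lemma ind_apply (s : Set ℕ) (m : ℕ) : ind s m = s.indicator 1 m := rfl

/-- Evaluation at a coordinate as a linear map. -/
def evalLM (m : ℕ) : LInf →ₗ[ℝ] ℝ where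
  toFun f := f m
  map_add' f g := rfl
  map_smul' c f := rfl

@[simp] lemma evalLM_apply (m : ℕ) (f : LInf) : evalLM m f = f m := rfl

lemma ind_not_mem_c0 (s : Set ℕ) (hs : s.Infinite) : ind s ∉ c0Sub := by
  intro h
  have h' : Filter.Tendsto (fun n => (ind s) n) Filter.atTop (nhds 0) := h
  rw [Metric.tendsto_atTop] at h'
  obtain ⟨N, hN⟩ := h' (1/2) (by norm_num)
  obtain ⟨m, hms, hm⟩ := hs.exists_gt N
  have := hN m hm.le
  rw [ind_apply, Set.indicator_of_mem hms] at this
  simp at this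
  norm_num at this

/-- A sequence vanishing off a finite set is in `c₀`. -/
lemma mem_c0_of_eventually_zero (f : LInf) (N : ℕ) (hf : ∀ m, N < m → f m = 0) :
    f ∈ c0Sub := by
  have : Filter.Tendsto (fun n => f n) Filter.atTop (nhds 0) := by
    apply Filter.Tendsto.congr' _ tendsto_const_nhds
    filter_upwards [Filter.eventually_gt_atTop N] with m hm
    exact (hf m hm).symm
  exact this

end PhillipsAux

open PhillipsAux

/-- **Phillips–Sobczyk theorem.** The space `c₀` is not complemented in `ℓ∞`:
there is no bounded linear projection of `ℓ∞` onto `c₀`. -/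
theorem c0_not_complemented_in_linf :
    ¬∃ P : LInf →L[ℝ] LInf, (∀ x, P (P x) = P x) ∧
      LinearMap.range (P : LInf →ₗ[ℝ] LInf) = c0Sub := by
  rintro ⟨P, hPP, hrange⟩
  -- The complementary "projection" vanishing on c₀
  set Q : LInf →L[ℝ] LInf := ContinuousLinearMap.id ℝ LInf - P with hQdef
  have hQ0 : ∀ x : LInf, x ∈ c0Sub → Q x = 0 := by
    intro x hx
    rw [← hrange] at hx
    obtain ⟨y, rfl⟩ := hx
    have : P ((P : LInf →ₗ[ℝ] LInf) y) = (P : LInf →ₗ[ℝ] LInf) y := hPP y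
    simp only [hQdef, ContinuousLinearMap.sub_apply, ContinuousLinearMap.id_apply]
    simp only [ContinuousLinearMap.coe_coe] at this ⊢
    rw [this, sub_self]
  have hQmem : ∀ x : LInf, x - Q x ∈ c0Sub := by
    intro x
    have : P x ∈ c0Sub := hrange ▸ LinearMap.mem_range_self _ x
    simpa [hQdef] using this
  -- the coordinates of `Q` applied to indicators
  set v : (ℕ → Bool) → ℕ → ℝ := fun x n => (Q (ind (A x))) n with hv
  -- Step 1: for each `n, k` only finitely many branches `x` have `1/(k+1) ≤ |v x n|`.
  have key : ∀ n k : ℕ, {x : ℕ → Bool | 1/(k+1 : ℝ) ≤ |v x n|}.Finite := by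
    intro n k
    by_contra hinf
    replace hinf : Set.Infinite _ := hinf
    set N : ℕ := ⌈‖Q‖ * (k+1)⌉₊ + 1 with hN
    obtain ⟨F, hFsub, hFcard⟩ := hinf.exists_subset_card_eq N
    -- signs
    set ε : (ℕ → Bool) → ℝ := fun x => if 0 ≤ v x n then 1 else -1 with hε
    have hεabs : ∀ x, |ε x| = 1 := by
      intro x; by_cases h : 0 ≤ v x n <;> simp [hε, h]
    have hεv : ∀ x, ε x * v x n = |v x n| := by
      intro x
      by_cases h : 0 ≤ v x n
      · simp [hε, h, abs_of_nonneg h]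
      · push_neg at h
        simp [hε, not_le.mpr h, abs_of_neg h]
    set g : LInf := ∑ x ∈ F, ε x • ind (A x) with hg
    have hgapp : ∀ m, g m = ∑ x ∈ F, ε x * (A x).indicator 1 m := by
      intro m
      have := map_sum (evalLM m) (fun x => ε x • ind (A x)) F
      simp only [evalLM_apply, map_smul, smul_eq_mul] at this
      simpa [hg, ind_apply] using this
    -- the finite "bad" set of coordinates where the supports overlap
    set B : Set ℕ := ⋃ x ∈ (F : Set (ℕ → Bool)), ⋃ y ∈ (F : Set (ℕ → Bool)) \ {x},
        A x ∩ A y with hB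
    have hBfin : B.Finite := by
      apply Set.Finite.biUnion F.finite_toSet
      intro x _
      apply Set.Finite.biUnion (F.finite_toSet.subset Set.diff_subset)
      intro y hy
      exact A_almost_disjoint (fun h => hy.2 (h ▸ rfl))
    -- off `B`, `g` is bounded by 1
    have hgsmall : ∀ m, m ∉ B → |g m| ≤ 1 := by
      intro m hm
      rw [hgapp]
      by_cases hex : ∃ x ∈ F, m ∈ A x
      · obtain ⟨x0, hx0F, hx0⟩ := hex
        rw [Finset.sum_eq_single_of_mem x0 hx0F]
        · rw [Set.indicator_of_mem hx0]
          simpa using (hεabs x0).le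
        · intro y hyF hyne
          have hmy : m ∉ A y := by
            intro hmy
            exact hm (Set.mem_biUnion hyF (Set.mem_biUnion ⟨hx0F, fun h => hyne ((by simpa using h : x0 = y).symm)⟩ ⟨hmy, hx0⟩))
          rw [Set.indicator_of_notMem hmy, mul_zero]
      · push_neg at hex
        have : ∀ x ∈ F, ε x * (A x).indicator 1 m = 0 := by
          intro x hxF
          rw [Set.indicator_of_notMem (hex x hxF), mul_zero]
        rw [Finset.sum_eq_zero this]
        norm_num
    -- split g = y + z with z finitely supported and ‖y‖ ≤ 1
    obtain ⟨M, hM⟩ : ∃ M : ℕ, ∀ m ∈ B, m ≤ M := by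
      obtain ⟨M, hM⟩ := hBfin.bddAbove
      exact ⟨M, fun m hm => hM hm⟩
    classical
    set z : LInf := mk (fun m => if m ∈ B then g m else 0) (by
      apply memℓp_infty
      refine ⟨‖g‖, ?_⟩
      rintro r ⟨m, rfl⟩
      by_cases hm : m ∈ B
      · simp only [hm, if_true]
        exact lp.norm_apply_le_norm ENNReal.top_ne_zero g m
      · simp [hm, norm_nonneg]) with hz
    have hzc0 : z ∈ c0Sub := by
      apply mem_c0_of_eventually_zero z M
      intro m hm
      have : m ∉ B := fun h => absurd (hM m h) (not_le.mpr hm)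
      simp [hz, this]
    have hynorm : ‖g - z‖ ≤ 1 := by
      apply lp.norm_le_of_forall_le zero_le_one
      intro m
      have : (g - z) m = g m - z m := by
        simp [lp.coeFn_sub]
      rw [this]
      by_cases hm : m ∈ B
      · simp [hz, hm]
      · simp only [hz, hm, if_false, mk_apply, sub_zero]
        simpa using hgsmall m hm
    -- bound on the coordinate
    have hQg : Q g = Q (g - z) := by
      have : Q z = 0 := hQ0 z hzc0
      rw [map_sub, this, sub_zero]
    have hbound : |(Q g) n| ≤ ‖Q‖ := by
      rw [hQg]
      calc |(Q (g - z)) n| ≤ ‖Q (g - z)‖ := by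
            simpa using lp.norm_apply_le_norm ENNReal.top_ne_zero (Q (g - z)) n
        _ ≤ ‖Q‖ * ‖g - z‖ := Q.le_opNorm _
        _ ≤ ‖Q‖ * 1 := by
            apply mul_le_mul_of_nonneg_left hynorm (norm_nonneg Q)
        _ = ‖Q‖ := mul_one _
    -- lower bound
    have hsum : (Q g) n = ∑ x ∈ F, ε x * v x n := by
      have := map_sum ((evalLM n).comp (Q : LInf →ₗ[ℝ] LInf)) (fun x => ε x • ind (A x)) F
      simp only [LinearMap.comp_apply, evalLM_apply, map_smul, smul_eq_mul,
        ContinuousLinearMap.coe_coe] at this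
      simpa [hg, hv] using this
    have hlower : (N : ℝ) * (1/(k+1 : ℝ)) ≤ (Q g) n := by
      rw [hsum, ← hFcard]
      have := Finset.card_nsmul_le_sum F (fun x => ε x * v x n) (1/(k+1 : ℝ))
        (fun x hxF => by show (1:ℝ)/(k+1) ≤ ε x * v x n; rw [hεv]; simpa using hFsub hxF)
      simpa [nsmul_eq_mul] using this
    have hfinal : (N : ℝ) * (1/(k+1 : ℝ)) ≤ ‖Q‖ := le_trans hlower (le_trans (le_abs_self _) hbound)
    have hk1 : (0:ℝ) < k + 1 := by positivity
    have hNle : (N : ℝ) ≤ ‖Q‖ * (k+1) := by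
      rw [mul_one_div, div_le_iff₀ hk1] at hfinal
      linarith
    have : (N : ℝ) ≤ (⌈‖Q‖ * (k+1)⌉₊ : ℝ) := le_trans hNle (Nat.le_ceil _)
    have hNN : N ≤ ⌈‖Q‖ * (k+1)⌉₊ := by exact_mod_cast this
    omega
  -- Step 2: the set of branches with `Q (ind (A x)) ≠ 0` is countable
  have hcount : {x : ℕ → Bool | Q (ind (A x)) ≠ 0}.Countable := by
    have hsub : {x : ℕ → Bool | Q (ind (A x)) ≠ 0} ⊆
        ⋃ n : ℕ, ⋃ k : ℕ, {x : ℕ → Bool | 1/(k+1 : ℝ) ≤ |v x n|} := by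
      intro x hx
      have : ∃ n, v x n ≠ 0 := by
        by_contra h
        push_neg at h
        apply hx
        ext n
        simpa using h n
      obtain ⟨n, hn⟩ := this
      have hpos : 0 < |v x n| := abs_pos.mpr hn
      obtain ⟨k, hk⟩ := exists_nat_one_div_lt hpos
      exact Set.mem_iUnion.mpr ⟨n, Set.mem_iUnion.mpr ⟨k, hk.le⟩⟩
    exact Set.Countable.mono hsub
      (Set.countable_iUnion fun n => Set.countable_iUnion fun k => (key n k).countable)
  -- Step 3: find a branch outside this countable set
  have huncount : ¬ (Set.univ : Set (ℕ → Bool)).Countable := by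
    rw [Set.countable_univ_iff]
    intro h
    have e : Set ℕ ≃ (ℕ → Bool) := Equiv.arrowCongr (Equiv.refl ℕ)
      (Classical.choice ⟨Equiv.propEquivBool⟩)
    have h2 : Countable (Set ℕ) := Countable.of_equiv _ e.symm
    obtain ⟨f, hf⟩ := (countable_iff_exists_injective (Set ℕ)).mp h2
    exact Function.cantor_injective f hf
  obtain ⟨x, hx⟩ : ∃ x : ℕ → Bool, Q (ind (A x)) = 0 := by
    by_contra h
    push_neg at h
    apply huncount
    have : {x : ℕ → Bool | Q (ind (A x)) ≠ 0} = Set.univ := by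
      ext x; simpa using h x
    rw [← this]
    exact hcount
  -- Step 4: contradiction
  have := hQmem (ind (A x))
  rw [hx, sub_zero] at this
  exact ind_not_mem_c0 (A x) (A_infinite x) this
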